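/- Let L be a continuous involutive division on ℕ^n. If a finite set 𝒩 ⊂ ℕ^n is locally involutive (i.e., for every ν ∈ 𝒩 and every non-multiplicative index j of ν, the multi index ν + e_j lies in the involutive span of 𝒩), then 𝒩 is weakly involutive, i.e., the involutive span of 𝒩 equals the full monoid ideal generated by 𝒩. -/
import Mathlib


/-- The restricted cone of `ν` determined by a set `N` of multiplicative indices. -/
def rcone {n : ℕ} (N : Set (Fin n)) (ν : Fin n → ℕ) : Set (Fin n → ℕ) :=
  {μ | (∀ i, ν i ≤ μ i) ∧ ∀ i ∉ N, μ i = ν i}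

/-- An involutive division on `ℕ^n`. -/
structure InvDiv (n : ℕ) where
  mult : Finset (Fin n → ℕ) → (Fin n → ℕ) → Set (Fin n)
  nested : ∀ (𝒩 : Finset (Fin n → ℕ)), ∀ μ ∈ 𝒩, ∀ ν ∈ 𝒩,
    (rcone (mult 𝒩 μ) μ ∩ rcone (mult 𝒩 ν) ν).Nonempty →
      rcone (mult 𝒩 μ) μ ⊆ rcone (mult 𝒩 ν) ν ∨
        rcone (mult 𝒩 ν) ν ⊆ rcone (mult 𝒩 μ) μ
  mono : ∀ (𝒩 𝒩' : Finset (Fin n → ℕ)), 𝒩' ⊆ 𝒩 → ∀ ν ∈ 𝒩', mult 𝒩 ν ⊆ mult 𝒩' ν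

/-- The involutive cone of `ν ∈ 𝒩` with respect to the division `L`. -/
def InvDiv.cone {n : ℕ} (L : InvDiv n) (𝒩 : Finset (Fin n → ℕ)) (ν : Fin n → ℕ) :
    Set (Fin n → ℕ) :=
  rcone (L.mult 𝒩 ν) ν

/-- The monoid ideal generated by a set of multi indices. -/
def mspan {n : ℕ} (𝒩 : Set (Fin n → ℕ)) : Set (Fin n → ℕ) :=
  {μ | ∃ ν ∈ 𝒩, ∀ i, ν i ≤ μ i}

/-- The involutive span of a finite set. -/
def invSpan {n : ℕ} (L : InvDiv n) (𝒩 : Finset (Fin n → ℕ)) : Set (Fin n → ℕ) :=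
  ⋃ ν ∈ 𝒩, L.cone 𝒩 ν

/-- Continuity of an involutive division: any finite sequence in a finite set `𝒩`
where each next element involutively divides the previous one increased by a
non-multiplicative index consists of pairwise distinct elements. -/
def InvDiv.Continuous {n : ℕ} (L : InvDiv n) : Prop :=
  ∀ (𝒩 : Finset (Fin n → ℕ)) (t : ℕ) (ν : Fin t → (Fin n → ℕ)),
    (∀ k, ν k ∈ 𝒩) →
    (∀ (k : ℕ) (h : k + 1 < t),
      ∃ j : Fin n, j ∉ L.mult 𝒩 (ν ⟨k, by omega⟩) ∧
        (ν ⟨k, by omega⟩ + Pi.single j 1) ∈ L.cone 𝒩 (ν ⟨k + 1, h⟩)) →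
    Function.Injective ν

/-- For a continuous involutive division, every locally involutive finite set is
weakly involutive: its involutive span equals the monoid ideal it generates. -/
theorem stmt9 {n : ℕ} (L : InvDiv n) (hc : L.Continuous) (𝒩 : Finset (Fin n → ℕ))
    (hloc : ∀ ν ∈ 𝒩, ∀ j : Fin n, j ∉ L.mult 𝒩 ν →
      (ν + Pi.single j 1) ∈ invSpan L 𝒩) :
    invSpan L 𝒩 = mspan ↑𝒩 := by
  apply Set.Subset.antisymm
  · intro μ hμ
    obtain ⟨ν, hν, hμ⟩ := Set.mem_iUnion₂.mp hμ
    exact ⟨ν, hν, hμ.1⟩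
  · intro μ hμ
    obtain ⟨ν₀, hν₀, hle₀⟩ := hμ
    by_contra hμs
    have step : ∀ ν ∈ 𝒩, (∀ i, ν i ≤ μ i) →
        ∃ ν' ∈ 𝒩, (∀ i, ν' i ≤ μ i) ∧ ∃ j, j ∉ L.mult 𝒩 ν ∧
          (ν + Pi.single j 1) ∈ L.cone 𝒩 ν' := by
      intro ν hν hle
      have hnotin : μ ∉ L.cone 𝒩 ν := fun h => hμs (Set.mem_iUnion₂.mpr ⟨ν, hν, h⟩)
      have hex : ∃ j, j ∉ L.mult 𝒩 ν ∧ μ j ≠ ν j := by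
        by_contra hcon
        push_neg at hcon
        exact hnotin ⟨hle, fun i hi => hcon i hi⟩
      obtain ⟨j, hj, hjne⟩ := hex
      have hjlt : ν j < μ j := lt_of_le_of_ne (hle j) (Ne.symm hjne)
      obtain ⟨ν', hν', hcone⟩ := Set.mem_iUnion₂.mp (hloc ν hν j hj)
      refine ⟨ν', hν', ?_, j, hj, hcone⟩
      intro i
      refine le_trans (hcone.1 i) ?_
      by_cases h : i = j
      · subst h
        simp only [Pi.add_apply, Pi.single_eq_same]
        omega
      · simpa [Pi.single_eq_of_ne h] using hle i
    have hstep : ∀ p : {ν // ν ∈ 𝒩 ∧ ∀ i, ν i ≤ μ i},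
        ∃ q : {ν // ν ∈ 𝒩 ∧ ∀ i, ν i ≤ μ i},
        ∃ j, j ∉ L.mult 𝒩 p.1 ∧ (p.1 + Pi.single j 1) ∈ L.cone 𝒩 q.1 := by
      rintro ⟨ν, hν, hle⟩
      obtain ⟨ν', hν', hle', j, hj, hc'⟩ := step ν hν hle
      exact ⟨⟨ν', hν', hle'⟩, j, hj, hc'⟩
    choose next hnext using hstep
    let seq : ℕ → {ν // ν ∈ 𝒩 ∧ ∀ i, ν i ≤ μ i} :=
      fun k => Nat.rec ⟨ν₀, hν₀, hle₀⟩ (fun _ p => next p) k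
    have hinj := hc 𝒩 (𝒩.card + 1) (fun k => (seq k.1).1)
      (fun k => (seq k.1).2.1)
      (fun k _ => hnext (seq k))
    have hcard := Finset.card_le_card_of_injOn
      (s := (Finset.univ : Finset (Fin (𝒩.card + 1)))) (t := 𝒩)
      (fun k : Fin (𝒩.card + 1) => (seq k.1).1)
      (fun k _ => (seq k.1).2.1) hinj.injOn
    simp at hcard
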